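/- Assume the event T_α holds for some 0 ≤ α < 1 and λ0 > 0. Let S = S1 ∪ S2 with S1 ∩ S2 = ∅, S1 ≠ ∅, s1 := |S1| and φ(6,S1) > 0, and choose the tuning parameter λ := λ0 · (φ²(6,S1)/s1)^{(1−α)/2}. Then ‖f̂ − f⁰‖_n² + λ‖β̂ − b^S‖₁ ≤ (343/6)·λ0²·(s1/φ²(6,S1))^{α} + (28/3)·λ0·(φ²(6,S1)/s1)^{(1−α)/2}·‖(b^S)_{S2}‖₁ + 7‖ff_S − f⁰‖_n². -/

import Mathlib

open Finset

noncomputable section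

/-- Squared normalized norm: `‖v‖ₙ² = ‖v‖₂²/n`. -/
def nsq (n : ℕ) (v : Fin n → ℝ) : ℝ := (∑ i, v i ^ 2) / n

/-- Normalized norm `‖v‖ₙ`. -/
def nnorm (n : ℕ) (v : Fin n → ℝ) : ℝ := Real.sqrt (nsq n v)

/-- `ℓ₁`-norm of a coefficient vector. -/
def l1 {p : ℕ} (β : Fin p → ℝ) : ℝ := ∑ j, |β j|

/-- `f_β := ∑ⱼ βⱼ ψⱼ`. -/
def fvec {n p : ℕ} (ψ : Fin p → Fin n → ℝ) (β : Fin p → ℝ) : Fin n → ℝ :=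
  fun i => ∑ j, β j * ψ j i

/-- Restriction `β_S` of `β` to an index set `S`. -/
def restr {p : ℕ} (S : Finset (Fin p)) (β : Fin p → ℝ) : Fin p → ℝ :=
  fun j => if j ∈ S then β j else 0

/-- Compatibility constant `φ²(L,S)`. -/
def phiSq {n p : ℕ} (ψ : Fin p → Fin n → ℝ) (L : ℝ) (S : Finset (Fin p)) : ℝ :=
  sInf {x : ℝ | ∃ β : Fin p → ℝ, l1 (restr S β) = 1 ∧ l1 (β - restr S β) ≤ L ∧
    x = S.card * nsq n (fvec ψ (restr S β) - fvec ψ (β - restr S β))}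

/-- Covering number `N(δ, F, ‖·‖ₙ)`. -/
def covN (n : ℕ) (δ : ℝ) (F : Set (Fin n → ℝ)) : ℕ :=
  sInf {N : ℕ | ∃ g : Fin N → (Fin n → ℝ), ∀ f ∈ F, ∃ k, nnorm n (f - g k) ≤ δ}

/-!
Write `δ = β̂ - b^S`, `s = |S₁|` and `c = √(s / φ²(6,S₁))`, so that `λ₀ = λ c^{1-α}`.
Comparing the Lasso objective at `β̂` and at `b^S` gives the basic inequality, and on `T_α` the
noise term is `2εᵀf_δ/n ≤ (λ₀/2) ‖f_δ‖ₙ^{1-α} ‖δ‖₁^α ≤ (λ/2)(c‖f_δ‖ₙ + ‖δ‖₁)` by weighted AM–GM.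
Splitting `‖·‖₁` over `S₁` and its complement leaves two cases: if `‖δ_{S₁ᶜ}‖₁ ≤ 6‖δ_{S₁}‖₁`,
the compatibility constant gives `‖δ_{S₁}‖₁ ≤ c‖f_δ‖ₙ`; otherwise `‖δ_{S₁ᶜ}‖₁` dominates and absorbs
the ℓ₁ terms. Either way `‖f_δ‖ₙ ≤ ‖f̂ - f⁰‖ₙ + ‖ff_S - f⁰‖ₙ` and completing squares finish.
-/

section

variable {n p : ℕ}

lemma nsq_nonneg (v : Fin n → ℝ) : 0 ≤ nsq n v := by
  unfold nsq; positivity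

lemma nsq_smul (c : ℝ) (v : Fin n → ℝ) : nsq n (c • v) = c ^ 2 * nsq n v := by
  simp only [nsq, Pi.smul_apply, smul_eq_mul, mul_pow, ← mul_sum, mul_div_assoc]

lemma nnorm_sq (v : Fin n → ℝ) : nnorm n v ^ 2 = nsq n v :=
  Real.sq_sqrt (nsq_nonneg v)

lemma nnorm_nonneg (v : Fin n → ℝ) : 0 ≤ nnorm n v := Real.sqrt_nonneg _

lemma nnorm_eq_norm_div_sqrt (v : Fin n → ℝ) :
    nnorm n v = ‖(WithLp.toLp 2 v : EuclideanSpace ℝ (Fin n))‖ / √n := by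
  have h := EuclideanSpace.norm_sq_eq (WithLp.toLp 2 v : EuclideanSpace ℝ (Fin n))
  simp only [Real.norm_eq_abs, sq_abs] at h
  rw [nnorm, nsq, ← h, Real.sqrt_div' _ (Nat.cast_nonneg n), Real.sqrt_sq (norm_nonneg _)]

lemma nnorm_sub_le (u v : Fin n → ℝ) : nnorm n (u - v) ≤ nnorm n u + nnorm n v := by
  simp only [nnorm_eq_norm_div_sqrt, ← add_div, WithLp.toLp_sub]
  gcongr
  exact norm_sub_le _ _

lemma l1_nonneg (β : Fin p → ℝ) : 0 ≤ l1 β := by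
  unfold l1; positivity

lemma l1_neg (β : Fin p → ℝ) : l1 (-β) = l1 β := by
  simp [l1]

lemma l1_smul (c : ℝ) (β : Fin p → ℝ) : l1 (c • β) = |c| * l1 β := by
  simp [l1, abs_mul, mul_sum]

lemma l1_add_le (β γ : Fin p → ℝ) : l1 (β + γ) ≤ l1 β + l1 γ := by
  simp only [l1, Pi.add_apply, ← sum_add_distrib]
  exact sum_le_sum fun j _ => abs_add_le _ _

lemma l1_sub_le_l1_add (β γ : Fin p → ℝ) : l1 β - l1 γ ≤ l1 (β + γ) := by
  have h := l1_add_le (β + γ) (-γ)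
  rw [add_neg_cancel_right, l1_neg] at h
  linarith

lemma l1_restr_add_l1_sub_restr (S : Finset (Fin p)) (β : Fin p → ℝ) :
    l1 (restr S β) + l1 (β - restr S β) = l1 β := by
  simp only [l1, restr, Pi.sub_apply, ← sum_add_distrib]
  refine sum_congr rfl fun j _ => ?_
  by_cases h : j ∈ S <;> simp [h]

lemma restr_sub (S : Finset (Fin p)) (β γ : Fin p → ℝ) :
    restr S (β - γ) = restr S β - restr S γ := by
  funext j; by_cases h : j ∈ S <;> simp [restr, h]

lemma sub_restr_eq_restr_of_support {S1 S2 : Finset (Fin p)} (hdisj : Disjoint S1 S2)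
    {b : Fin p → ℝ} (hb : ∀ j, j ∉ S1 ∪ S2 → b j = 0) : b - restr S1 b = restr S2 b := by
  funext j
  by_cases h1 : j ∈ S1
  · simp [restr, h1, disjoint_left.mp hdisj h1]
  · by_cases h2 : j ∈ S2
    · simp [restr, h1, h2]
    · simp [restr, h1, h2, hb j (by simp [h1, h2])]

lemma l1_sub_l1_le (S : Finset (Fin p)) (β b : Fin p → ℝ) :
    l1 b - l1 β ≤ l1 (restr S (β - b)) - l1 ((β - b) - restr S (β - b))
      + 2 * l1 (b - restr S b) := by
  have hS := l1_sub_le_l1_add (restr S b) (restr S (β - b))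
  have hSc := l1_sub_le_l1_add ((β - b) - restr S (β - b)) (b - restr S b)
  rw [← l1_restr_add_l1_sub_restr S b, ← l1_restr_add_l1_sub_restr S β]
  rw [restr_sub] at hS hSc ⊢
  rw [show restr S b + (restr S β - restr S b) = restr S β by abel] at hS
  rw [show β - b - (restr S β - restr S b) + (b - restr S b) = β - restr S β by abel] at hSc
  linarith

lemma fvec_sub (ψ : Fin p → Fin n → ℝ) (β γ : Fin p → ℝ) :
    fvec ψ (β - γ) = fvec ψ β - fvec ψ γ := by
  funext i; simp [fvec, sub_mul, sum_sub_distrib]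

lemma fvec_smul (ψ : Fin p → Fin n → ℝ) (c : ℝ) (β : Fin p → ℝ) :
    fvec ψ (c • β) = c • fvec ψ β := by
  funext i; simp [fvec, mul_assoc, mul_sum]

lemma phiSq_le (ψ : Fin p → Fin n → ℝ) {L : ℝ} {S : Finset (Fin p)} (β : Fin p → ℝ)
    (hS : l1 (restr S β) = 1) (hSc : l1 (β - restr S β) ≤ L) :
    phiSq ψ L S ≤ S.card * nsq n (fvec ψ (restr S β) - fvec ψ (β - restr S β)) :=
  csInf_le ⟨0, by rintro _ ⟨γ, -, -, rfl⟩; exact mul_nonneg (Nat.cast_nonneg _) (nsq_nonneg _)⟩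
    ⟨β, hS, hSc, rfl⟩

lemma phiSq_mul_l1_sq_le (ψ : Fin p → Fin n → ℝ) {L : ℝ} {S : Finset (Fin p)}
    {δ : Fin p → ℝ} (hcone : l1 (δ - restr S δ) ≤ L * l1 (restr S δ)) :
    phiSq ψ L S * l1 (restr S δ) ^ 2 ≤ S.card * nsq n (fvec ψ δ) := by
  obtain hr | hr := (l1_nonneg (restr S δ)).eq_or_lt
  · rw [← hr]
    simpa using mul_nonneg (Nat.cast_nonneg S.card) (nsq_nonneg (fvec ψ δ))
  set r := l1 (restr S δ)
  -- flipping the sign of `δ` off `S` turns `f_{β_S} - f_{β_{Sᶜ}}` into a multiple of `f_δ`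
  set β := r⁻¹ • (restr S δ - (δ - restr S δ))
  have hβS : restr S β = r⁻¹ • restr S δ := by
    funext j; by_cases h : j ∈ S <;> simp [β, restr, h]
  have hβSc : β - restr S β = -(r⁻¹ • (δ - restr S δ)) := by
    funext j; by_cases h : j ∈ S <;> simp [β, restr, h]
  have hφ := phiSq_le ψ β (S := S) (L := L)
    (by rw [hβS, l1_smul, abs_inv, abs_of_pos hr, inv_mul_cancel₀ hr.ne'])
    (by rw [hβSc, l1_neg, l1_smul, abs_inv, abs_of_pos hr, inv_mul_le_iff₀ hr, mul_comm]
        exact hcone)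
  have hdiff : restr S β - (β - restr S β) = r⁻¹ • δ := by
    rw [hβSc, hβS, sub_neg_eq_add, ← smul_add, add_sub_cancel]
  rw [← fvec_sub, hdiff, fvec_smul, nsq_smul, inv_pow] at hφ
  rw [← le_div_iff₀ (by positivity)]
  calc phiSq ψ L S ≤ S.card * ((r ^ 2)⁻¹ * nsq n (fvec ψ δ)) := hφ
    _ = S.card * nsq n (fvec ψ δ) / r ^ 2 := by ring

lemma l1_restr_le_sqrt_mul_nnorm (ψ : Fin p → Fin n → ℝ) {L : ℝ}
    {S : Finset (Fin p)} (hφ : 0 < phiSq ψ L S) {δ : Fin p → ℝ}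
    (hcone : l1 (δ - restr S δ) ≤ L * l1 (restr S δ)) :
    l1 (restr S δ) ≤ √(S.card / phiSq ψ L S) * nnorm n (fvec ψ δ) := by
  rw [nnorm, ← Real.sqrt_mul (by positivity), Real.le_sqrt (l1_nonneg _) (by
    have := nsq_nonneg (fvec ψ δ); positivity), div_mul_eq_mul_div, le_div_iff₀ hφ, mul_comm]
  exact phiSq_mul_l1_sq_le ψ hcone

lemma rpow_mul_rpow_le_add {a b θ : ℝ} (ha : 0 ≤ a) (hb : 0 ≤ b) (hθ0 : 0 ≤ θ) (hθ1 : θ ≤ 1) :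
    a ^ (1 - θ) * b ^ θ ≤ a + b := by
  have h := Real.geom_mean_le_arith_mean2_weighted (by linarith) hθ0 ha hb (sub_add_cancel 1 θ)
  nlinarith

lemma div_rpow_half_mul_sqrt_div_rpow {a b : ℝ} (ha : 0 < a) (hb : 0 < b) (θ : ℝ) :
    (b / a) ^ (θ / 2) * √(a / b) ^ θ = 1 := by
  rw [Real.sqrt_eq_rpow, ← Real.rpow_mul (by positivity), one_div_mul_eq_div,
    ← Real.mul_rpow (by positivity) (by positivity), div_mul_div_cancel₀ ha.ne',
    div_self hb.ne', Real.one_rpow]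

lemma div_rpow_sq_mul_div {a b : ℝ} (ha : 0 < a) (hb : 0 < b) (α : ℝ) :
    ((b / a) ^ ((1 - α) / 2)) ^ 2 * (a / b) = (a / b) ^ α := by
  have hab : 0 < a / b := by positivity
  rw [← Real.rpow_natCast, ← Real.rpow_mul (by positivity), ← inv_div, Real.inv_rpow hab.le,
    show (1 - α) / 2 * ((2 : ℕ) : ℝ) = 1 - α by push_cast; ring, Real.rpow_sub hab, Real.rpow_one]
  field_simp

lemma two_mul_div_le_of_abs_le_rpow {X m lam0 lam c N l α : ℝ} (hm : 0 ≤ m) (hα0 : 0 ≤ α)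
    (hα1 : α ≤ 1) (hlam : 0 ≤ lam) (hc : 0 ≤ c) (hN : 0 ≤ N) (hl : 0 ≤ l)
    (hlam0 : lam0 = lam * c ^ (1 - α)) (hX : 4 * |X| / m ≤ lam0 * N ^ (1 - α) * l ^ α) :
    2 * X / m ≤ lam / 2 * (c * N + l) := by
  have hyoung : lam0 * N ^ (1 - α) * l ^ α ≤ lam * (c * N + l) := by
    rw [hlam0, mul_assoc lam, ← Real.mul_rpow hc hN, mul_assoc]
    exact mul_le_mul_of_nonneg_left (rpow_mul_rpow_le_add (by positivity) hl hα0 hα1) hlam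
  calc 2 * X / m ≤ 2 * |X| / m := by gcongr; exact le_abs_self X
    _ = 4 * |X| / m / 2 := by ring
    _ ≤ lam * (c * N + l) / 2 := by gcongr; exact hX.trans hyoung
    _ = lam / 2 * (c * N + l) := by ring

lemma nsq_add_le_of_sum_sq_add_le {u v f ε : Fin n → ℝ} {a b : ℝ}
    (h : (∑ i, (f i + ε i - u i) ^ 2) / n + a ≤ (∑ i, (f i + ε i - v i) ^ 2) / n + b) :
    nsq n (u - f) + a ≤ 2 * (∑ i, ε i * (u - v) i) / n + nsq n (v - f) + b := by
  have hexpand : ∑ i, (f i + ε i - u i) ^ 2 - ∑ i, (f i + ε i - v i) ^ 2 =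
      ∑ i, (u - f) i ^ 2 - ∑ i, (v - f) i ^ 2 - 2 * ∑ i, ε i * (u - v) i := by
    simp only [Pi.sub_apply, mul_sum, ← sum_sub_distrib]
    exact sum_congr rfl fun i _ => by ring
  have hdiv := congrArg (· / (n : ℝ)) hexpand
  simp only [sub_div] at hdiv
  unfold nsq
  linarith

lemma lasso_basic_ineq {ψ : Fin p → Fin n → ℝ} {β0 hatβ b : Fin p → ℝ}
    {ε : Fin n → ℝ} {lam R : ℝ} (hlam : 0 ≤ lam) (S : Finset (Fin p))
    (hmin : (∑ i, (fvec ψ β0 i + ε i - fvec ψ hatβ i) ^ 2) / n + lam * l1 hatβ ≤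
      (∑ i, (fvec ψ β0 i + ε i - fvec ψ b i) ^ 2) / n + lam * l1 b)
    (hnoise : 2 * (∑ i, ε i * fvec ψ (hatβ - b) i) / n ≤ lam / 2 * (R + l1 (hatβ - b))) :
    nsq n (fvec ψ hatβ - fvec ψ β0) + lam / 2 * l1 ((hatβ - b) - restr S (hatβ - b)) ≤
      lam / 2 * R + 3 * lam / 2 * l1 (restr S (hatβ - b)) + nsq n (fvec ψ b - fvec ψ β0)
        + 2 * lam * l1 (b - restr S b) := by
  have h := nsq_add_le_of_sum_sq_add_le hmin
  rw [← fvec_sub ψ hatβ b] at h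
  rw [← l1_restr_add_l1_sub_restr S (hatβ - b)] at hnoise
  have hl1 := mul_le_mul_of_nonneg_left (l1_sub_l1_le S hatβ b) hlam
  linarith

lemma sq_add_mul_le_of_basic_ineq {g d N c lam d1 d2 B : ℝ}
    (hc : 0 ≤ c) (hlam : 0 ≤ lam) (hB : 0 ≤ B) (hN : N ≤ g + d)
    (hbasic : g ^ 2 + lam / 2 * d2 ≤
      lam / 2 * (c * N) + 3 * lam / 2 * d1 + d ^ 2 + 2 * lam * B)
    (hcone : d2 ≤ 6 * d1 → d1 ≤ c * N) :
    g ^ 2 + lam * (d1 + d2) ≤ 25 / 2 * lam ^ 2 * c ^ 2 + 28 / 3 * lam * B + 7 * d ^ 2 := by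
  -- in both cases `λ c (g + d)` is absorbed into `g²`, `d²` and `λ² c²` by completing squares
  have hcN : lam * (c * N) ≤ lam * (c * g) + lam * (c * d) := by
    rw [← mul_add, ← mul_add]; gcongr
  by_cases h : d2 ≤ 6 * d1
  · have h1 := mul_le_mul_of_nonneg_left (hcone h) hlam
    nlinarith [sq_nonneg (g - 5 / 2 * (lam * c)), sq_nonneg (d - 5 / 2 * (lam * c))]
  · have h1 := mul_le_mul_of_nonneg_left (not_le.mp h).le hlam
    nlinarith [sq_nonneg (22 * g - 7 * (lam * c)), sq_nonneg (2 * d - lam * c),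
      sq_nonneg (lam * c)]

end

theorem stmt3_general {n p : ℕ}
    (ψ : Fin p → Fin n → ℝ)
    (β0 : Fin p → ℝ) (ε : Fin n → ℝ)
    (α lam0 lam : ℝ) (hα0 : 0 ≤ α) (hα1 : α < 1) (hlam0 : 0 < lam0)
    (S S1 S2 : Finset (Fin p)) (hS : S = S1 ∪ S2) (hdisj : Disjoint S1 S2)
    (hS1ne : S1.Nonempty) (hphi : 0 < phiSq ψ 6 S1)
    (hlam : lam = lam0 * (phiSq ψ 6 S1 / S1.card) ^ ((1 - α) / 2))
    (hT : ∀ β : Fin p → ℝ,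
      4 * |∑ i, ε i * fvec ψ β i| / n ≤
        lam0 * nnorm n (fvec ψ β) ^ (1 - α) * l1 β ^ α)
    (hatβ : Fin p → ℝ)
    (hmin : ∀ β : Fin p → ℝ,
      (∑ i, (fvec ψ β0 i + ε i - fvec ψ hatβ i) ^ 2) / n + lam * l1 hatβ ≤
        (∑ i, (fvec ψ β0 i + ε i - fvec ψ β i) ^ 2) / n + lam * l1 β)
    (bS : Fin p → ℝ) (hbS_supp : ∀ j, j ∉ S → bS j = 0)
 :
    nsq n (fvec ψ hatβ - fvec ψ β0) + lam * l1 (hatβ - bS) ≤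
      (343 / 6) * lam0 ^ 2 * ((S1.card : ℝ) / phiSq ψ 6 S1) ^ α
        + (28 / 3) * lam0 * (phiSq ψ 6 S1 / S1.card) ^ ((1 - α) / 2) * l1 (restr S2 bS)
        + 7 * nsq n (fvec ψ bS - fvec ψ β0) := by
  subst hS
  have hs : (0 : ℝ) < S1.card := by exact_mod_cast hS1ne.card_pos
  set c := √(S1.card / phiSq ψ 6 S1)
  have hlam_pos : 0 < lam := hlam ▸ mul_pos hlam0 (by positivity)
  have hlam0_eq : lam0 = lam * c ^ (1 - α) := by
    rw [hlam, mul_assoc, div_rpow_half_mul_sqrt_div_rpow hs hphi, mul_one]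
  have hnoise := two_mul_div_le_of_abs_le_rpow (Nat.cast_nonneg n) hα0 hα1.le hlam_pos.le
    (Real.sqrt_nonneg _) (nnorm_nonneg _) (l1_nonneg _) hlam0_eq (hT (hatβ - bS))
  have hbasic := lasso_basic_ineq hlam_pos.le S1 (hmin bS) hnoise
  rw [sub_restr_eq_restr_of_support hdisj hbS_supp, ← nnorm_sq, ← nnorm_sq] at hbasic
  have htri : nnorm n (fvec ψ (hatβ - bS)) ≤
      nnorm n (fvec ψ hatβ - fvec ψ β0) + nnorm n (fvec ψ bS - fvec ψ β0) := by
    have h := nnorm_sub_le (fvec ψ hatβ - fvec ψ β0) (fvec ψ bS - fvec ψ β0)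
    rwa [sub_sub_sub_cancel_right, ← fvec_sub] at h
  have hkey := sq_add_mul_le_of_basic_ineq (Real.sqrt_nonneg _) hlam_pos.le (l1_nonneg _) htri
    hbasic fun hcone => l1_restr_le_sqrt_mul_nnorm ψ hphi (by linarith)
  have hc_sq : lam ^ 2 * c ^ 2 = lam0 ^ 2 * ((S1.card : ℝ) / phiSq ψ 6 S1) ^ α := by
    rw [hlam, Real.sq_sqrt (div_pos hs hphi).le, mul_pow, mul_assoc, div_rpow_sq_mul_div hs hphi]
  have hlamB : 28 / 3 * lam0 * (phiSq ψ 6 S1 / S1.card) ^ ((1 - α) / 2) * l1 (restr S2 bS) =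
      28 / 3 * lam * l1 (restr S2 bS) := by
    rw [hlam]; ring
  rw [← nnorm_sq, ← nnorm_sq, ← l1_restr_add_l1_sub_restr S1 (hatβ - bS), hlamB]
  linarith [sq_nonneg (lam * c)]

theorem stmt3 {n p : ℕ} (hn : 1 ≤ n) (hp : 1 ≤ p)
    (ψ : Fin p → Fin n → ℝ) (hψ : ∀ j, ∑ i, (ψ j i) ^ 2 ≤ (n : ℝ))
    (β0 : Fin p → ℝ) (ε : Fin n → ℝ)
    (α lam0 lam : ℝ) (hα0 : 0 ≤ α) (hα1 : α < 1) (hlam0 : 0 < lam0)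
    (S S1 S2 : Finset (Fin p)) (hS : S = S1 ∪ S2) (hdisj : Disjoint S1 S2)
    (hS1ne : S1.Nonempty) (hphi : 0 < phiSq ψ 6 S1)
    (hlam : lam = lam0 * (phiSq ψ 6 S1 / S1.card) ^ ((1 - α) / 2))
    (hT : ∀ β : Fin p → ℝ,
      4 * |∑ i, ε i * fvec ψ β i| / n ≤
        lam0 * nnorm n (fvec ψ β) ^ (1 - α) * l1 β ^ α)
    (hatβ : Fin p → ℝ)
    (hmin : ∀ β : Fin p → ℝ,
      (∑ i, (fvec ψ β0 i + ε i - fvec ψ hatβ i) ^ 2) / n + lam * l1 hatβ ≤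
        (∑ i, (fvec ψ β0 i + ε i - fvec ψ β i) ^ 2) / n + lam * l1 β)
    (bS : Fin p → ℝ) (hbS_supp : ∀ j, j ∉ S → bS j = 0)
    (hbS_proj : ∀ b : Fin p → ℝ, (∀ j, j ∉ S → b j = 0) →
      nsq n (fvec ψ bS - fvec ψ β0) ≤ nsq n (fvec ψ b - fvec ψ β0))
 :
    nsq n (fvec ψ hatβ - fvec ψ β0) + lam * l1 (hatβ - bS) ≤
      (343 / 6) * lam0 ^ 2 * ((S1.card : ℝ) / phiSq ψ 6 S1) ^ α
        + (28 / 3) * lam0 * (phiSq ψ 6 S1 / S1.card) ^ ((1 - α) / 2) * l1 (restr S2 bS)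
        + 7 * nsq n (fvec ψ bS - fvec ψ β0) :=
  stmt3_general ψ β0 ε α lam0 lam hα0 hα1 hlam0 S S1 S2 hS hdisj hS1ne hphi hlam hT hatβ hmin bS
    hbS_supp
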